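/- arXiv:2210.06845 — 6 statements merged into one kernel-verified Lean document; each statement's English description precedes it below -/
import Mathlib

section
/- Let H be a finite simple graph that is a non-bipartite core, let G' be a finite simple graph, let V' ⊆ V(G'), and let h' : V' → V(H). Let G be the simple graph on the disjoint union V(G') ⊔ V(H) in which two vertices of V(G') are adjacent iff they are adjacent in G', two vertices of V(H) are adjacent iff they are adjacent in H, and a vertex v ∈ V(G') is adjacent to a vertex u ∈ V(H) iff v ∈ V' and u is a neighbor of h'(v) in H. Then there exists a homomorphism from G to H if and only if there exists a homomorphism h : G' → H with h(v) = h'(v) for all v ∈ V'. -/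
/-!
A homomorphism `f : G →g H` restricts on the `H`-side to an endomorphism `g` of `H`, which is an
automorphism because `H` is a finite core (an injective endomorphism permutes the finite edge set).
Then `g⁻¹ ∘ f` restricted to `G'` sends each `v ∈ V'` to a vertex whose neighbourhood contains
that of `h' v`; in a core this forces equality, since redirecting `h' v` to that vertex would give
a non-injective endomorphism. Conversely, a homomorphism `G' →g H` extending `h'` glues with the
identity of `H` to a homomorphism `G →g H`.
-/

open Function

namespace SimpleGraph
variable {V : Type*} {H : SimpleGraph V}

theorem Hom.adj_iff_of_injective [Finite V] (g : H →g H) (hg : Injective g) {x y : V} :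
    H.Adj (g x) (g y) ↔ H.Adj x y := by
  refine ⟨fun hadj => ?_, g.map_adj⟩
  have hbij : Set.BijOn (Sym2.map g) H.edgeSet H.edgeSet :=
    (H.edgeSet.toFinite.injOn_iff_bijOn_of_mapsTo
      (fun e he => g.map_mem_edgeSet he)).1 (Sym2.map.injective hg).injOn
  obtain ⟨e, he, hge⟩ := hbij.surjOn (show s(g x, g y) ∈ H.edgeSet from hadj)
  obtain rfl : e = s(x, y) := Sym2.map.injective hg (by simpa using hge)
  exact he

noncomputable def Hom.isoOfInjective [Finite V] (g : H →g H) (hg : Injective g) : H ≃g H :=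
  ⟨Equiv.ofBijective g (Finite.injective_iff_bijective.1 hg), g.adj_iff_of_injective hg⟩

@[simp]
theorem Hom.coe_isoOfInjective [Finite V] (g : H →g H) (hg : Injective g) :
    ⇑(g.isoOfInjective hg) = g :=
  rfl

theorem eq_of_neighborSet_subset (hcore : ∀ f : H →g H, Injective f) {a r : V}
    (hsub : H.neighborSet a ⊆ H.neighborSet r) : r = a := by
  classical
  have hra : ∀ {y}, H.Adj a y → H.Adj r y := fun hy => hsub hy
  let φ : H →g H := ⟨update id a r, fun {x y} hxy => by
    by_cases hx : x = a <;> by_cases hy : y = a <;> subst_vars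
    · exact absurd hxy H.irrefl
    · simpa [hy] using hra hxy
    · simpa [hx] using (hra hxy.symm).symm
    · simpa [hx, hy] using hxy⟩
  by_contra hne
  exact hne (hcore φ (by simp [φ, hne]))

end SimpleGraph

theorem stmt_0_general {VG VH : Type} [Fintype VH]
    (H : SimpleGraph VH) (G' : SimpleGraph VG)
    (hcore : ∀ f : H →g H, Function.Injective f)
    (V' : Set VG) (h' : V' → VH)
    (G : SimpleGraph (VG ⊕ VH))
    (hGG : ∀ v u : VG, G.Adj (Sum.inl v) (Sum.inl u) ↔ G'.Adj v u)
    (hHH : ∀ u u' : VH, G.Adj (Sum.inr u) (Sum.inr u') ↔ H.Adj u u')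
    (hGH : ∀ (v : VG) (u : VH),
      G.Adj (Sum.inl v) (Sum.inr u) ↔ ∃ hv : v ∈ V', H.Adj (h' ⟨v, hv⟩) u) :
    Nonempty (G →g H) ↔
      ∃ h : G' →g H, ∀ (v : VG) (hv : v ∈ V'), h v = h' ⟨v, hv⟩ := by
  constructor
  · rintro ⟨f⟩
    let inl : G' →g G := ⟨Sum.inl, (hGG _ _).2⟩
    let g : H →g H := f.comp ⟨Sum.inr, (hHH _ _).2⟩
    let e := g.isoOfInjective (hcore g)
    refine ⟨e.symm.toHom.comp (f.comp inl), fun v hv =>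
      SimpleGraph.eq_of_neighborSet_subset hcore fun u hu => ?_⟩
    have hfu : H.Adj (f (Sum.inl v)) (e u) := f.map_adj ((hGH v u).2 ⟨hv, hu⟩)
    simpa [inl] using e.symm.map_adj_iff.2 hfu
  · rintro ⟨h, hh⟩
    refine ⟨⟨Sum.elim h id, ?_⟩⟩
    rintro (v | u) (v' | u') hadj
    · exact h.map_adj ((hGG v v').1 hadj)
    · obtain ⟨hv, hadj'⟩ := (hGH v u').1 hadj
      simpa [hh v hv] using hadj'
    · obtain ⟨hv, hadj'⟩ := (hGH v' u).1 hadj.symm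
      simpa [hh v' hv] using hadj'.symm
    · exact (hHH u u').1 hadj

/-- Reduction from homomorphism extension to plain homomorphism
for a non-bipartite core target `H`. -/
theorem stmt_0 {VG VH : Type} [Fintype VG] [Fintype VH]
    (H : SimpleGraph VH) (G' : SimpleGraph VG)
    (hcore : ∀ f : H →g H, Function.Injective f)
    (hnonbip : ¬ H.Colorable 2)
    (V' : Set VG) (h' : V' → VH)
    (G : SimpleGraph (VG ⊕ VH))
    (hGG : ∀ v u : VG, G.Adj (Sum.inl v) (Sum.inl u) ↔ G'.Adj v u)
    (hHH : ∀ u u' : VH, G.Adj (Sum.inr u) (Sum.inr u') ↔ H.Adj u u')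
    (hGH : ∀ (v : VG) (u : VH),
      G.Adj (Sum.inl v) (Sum.inr u) ↔ ∃ hv : v ∈ V', H.Adj (h' ⟨v, hv⟩) u) :
    Nonempty (G →g H) ↔
      ∃ h : G' →g H, ∀ (v : VG) (hv : v ∈ V'), h v = h' ⟨v, hv⟩ :=
  stmt_0_general H G' hcore V' h' G hGG hHH hGH
end

section
/- Let H₁ and W be finite simple graphs such that the product H := H₁ × W is a connected non-bipartite core and is H₁-projective. Then for every nonempty set S ⊆ V(H₁) × V(H₁) and all w, w' ∈ V(W) there exists an (S,w,w')-gadget. -/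
/-!
Take `F = H₁ⁿ × W`, one `H₁`-coordinate for each of the `n` pairs of `S`, pin every diagonal
vertex `(x, …, x, y)` to `(x, y)`, and let `p`, `q` be the vertices whose `H₁`-coordinates list
the first, resp. second, components of the pairs of `S`. A pinned homomorphism `F → H₁ × W` has
an `H₁`-idempotent first component, which by projectivity is a coordinate projection, so it sends
`(p, q)` to a pair of `S`; conversely the projection onto the coordinate of a pair realises it.
-/

/-- The direct (tensor) product of two simple graphs. -/
def tensorProd {V₁ V₂ : Type} (H₁ : SimpleGraph V₁) (H₂ : SimpleGraph V₂) :
    SimpleGraph (V₁ × V₂) where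
  Adj x y := H₁.Adj x.1 y.1 ∧ H₂.Adj x.2 y.2
  symm := ⟨fun _ _ h => ⟨h.1.symm, h.2.symm⟩⟩
  loopless := ⟨fun _ h => H₁.irrefl h.1⟩

/-- The direct product of `ℓ` copies of `H₁` and one copy of `W`. -/
def powProd {V₁ VW : Type} (H₁ : SimpleGraph V₁) (W : SimpleGraph VW) (ℓ : ℕ) :
    SimpleGraph ((Fin ℓ → V₁) × VW) where
  Adj x y := (∀ i, H₁.Adj (x.1 i) (y.1 i)) ∧ W.Adj x.2 y.2
  symm := ⟨fun _ _ h => ⟨fun i => (h.1 i).symm, h.2.symm⟩⟩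
  loopless := ⟨fun _ h => W.irrefl h.2⟩

/-- `H₁ × W` is `H₁`-projective: for every `ℓ ≥ 1`, every `H₁`-idempotent
homomorphism `f : H₁^ℓ × W → H₁` is a projection onto one of the `H₁`-coordinates. -/
def H1Projective {V₁ VW : Type} (H₁ : SimpleGraph V₁) (W : SimpleGraph VW) : Prop :=
  ∀ ℓ : ℕ, 1 ≤ ℓ → ∀ f : powProd H₁ W ℓ →g H₁,
    (∀ (x : V₁) (y : VW), f (fun _ => x, y) = x) →
    ∃ i : Fin ℓ, ∀ z : (Fin ℓ → V₁) × VW, f z = z.1 i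

namespace powProd

variable {V₁ VW : Type} {H₁ : SimpleGraph V₁} {W : SimpleGraph VW} {n : ℕ}

def proj (i : Fin n) : powProd H₁ W n →g tensorProd H₁ W where
  toFun z := (z.1 i, z.2)
  map_rel' h := ⟨h.1 i, h.2⟩

@[simp]
lemma proj_apply (i : Fin n) (z : (Fin n → V₁) × VW) :
    proj (H₁ := H₁) (W := W) i z = (z.1 i, z.2) :=
  rfl

def diag (V₁ VW : Type) (n : ℕ) : Set ((Fin n → V₁) × VW) :=
  Set.range fun xy : V₁ × VW => (fun _ => xy.1, xy.2)

lemma proj_apply_of_mem_diag (i j : Fin n) {z : (Fin n → V₁) × VW}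
    (hz : z ∈ diag V₁ VW n) :
    proj (H₁ := H₁) (W := W) i z = (z.1 j, z.2) := by
  obtain ⟨xy, rfl⟩ := hz
  rfl

theorem exists_fst_eq_apply (hproj : H1Projective H₁ W) (hn : 1 ≤ n)
    (h : powProd H₁ W n →g tensorProd H₁ W)
    (hdiag : ∀ (x : V₁) (y : VW), h (fun _ => x, y) = (x, y)) :
    ∃ i : Fin n, ∀ z, (h z).1 = z.1 i :=
  hproj n hn ⟨fun z => (h z).1, fun hadj => (h.map_rel hadj).1⟩ fun x y => by
    simp [hdiag]

theorem fst_apply_mem_range (hproj : H1Projective H₁ W) (hn : 1 ≤ n)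
    (h : powProd H₁ W n →g tensorProd H₁ W)
    (hdiag : ∀ (x : V₁) (y : VW), h (fun _ => x, y) = (x, y))
    (e : Fin n → V₁ × V₁) (w w' : VW) :
    ((h (fun i => (e i).1, w)).1, (h (fun i => (e i).2, w')).1) ∈ Set.range e := by
  obtain ⟨i, hi⟩ := exists_fst_eq_apply hproj hn h hdiag
  exact ⟨i, by rw [hi, hi]⟩

end powProd

open powProd in
theorem stmt_1_general {V₁ VW : Type} [Fintype V₁] [Fintype VW]
    (H₁ : SimpleGraph V₁) (W : SimpleGraph VW)
    (hproj : H1Projective H₁ W)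
    (S : Set (V₁ × V₁)) (hS : S.Nonempty) (w w' : VW) :
    ∃ (VF : Type) (_ : Fintype VF) (F : SimpleGraph VF) (V' : Set VF)
      (h' : V' → V₁ × VW) (p q : VF),
      (∀ h : F →g tensorProd H₁ W,
        (∀ (v : VF) (hv : v ∈ V'), h v = h' ⟨v, hv⟩) → ((h p).1, (h q).1) ∈ S) ∧
      (∀ s ∈ S, ∃ h : F →g tensorProd H₁ W,
        (∀ (v : VF) (hv : v ∈ V'), h v = h' ⟨v, hv⟩) ∧
        h p = (s.1, w) ∧ h q = (s.2, w')) := by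
  obtain ⟨n, ⟨eqv⟩⟩ := Finite.exists_equiv_fin S
  have hn : 1 ≤ n := Fin.pos_iff_nonempty.mpr ⟨eqv ⟨_, hS.some_mem⟩⟩
  let e : Fin n → V₁ × V₁ := Subtype.val ∘ eqv.symm
  have hrange : Set.range e = S := by
    rw [Set.range_comp, eqv.symm.range_eq_univ, Set.image_univ, Subtype.range_coe]
  refine ⟨_, inferInstance, powProd H₁ W n, diag V₁ VW n, fun v => (v.1.1 ⟨0, hn⟩, v.1.2),
    (fun i => (e i).1, w), (fun i => (e i).2, w'), fun h hpin => ?_, fun s hs => ?_⟩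
  · rw [← hrange]
    exact fst_apply_mem_range hproj hn h (fun x y => hpin _ ⟨(x, y), rfl⟩) e w w'
  · refine ⟨proj (eqv ⟨s, hs⟩), fun v hv => proj_apply_of_mem_diag _ _ hv, ?_, ?_⟩ <;>
      simp [e]

/-- Existence of `(S,w,w')`-gadgets when `H = H₁ × W` is a connected
non-bipartite core that is `H₁`-projective. -/
theorem stmt_1 {V₁ VW : Type} [Fintype V₁] [Fintype VW]
    (H₁ : SimpleGraph V₁) (W : SimpleGraph VW)
    (hconn : (tensorProd H₁ W).Connected)
    (hnonbip : ¬ (tensorProd H₁ W).Colorable 2)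
    (hcore : ∀ f : tensorProd H₁ W →g tensorProd H₁ W, Function.Injective f)
    (hproj : H1Projective H₁ W)
    (S : Set (V₁ × V₁)) (hS : S.Nonempty) (w w' : VW) :
    ∃ (VF : Type) (_ : Fintype VF) (F : SimpleGraph VF) (V' : Set VF)
      (h' : V' → V₁ × VW) (p q : VF),
      (∀ h : F →g tensorProd H₁ W,
        (∀ (v : VF) (hv : v ∈ V'), h v = h' ⟨v, hv⟩) → ((h p).1, (h q).1) ∈ S) ∧
      (∀ s ∈ S, ∃ h : F →g tensorProd H₁ W,
        (∀ (v : VF) (hv : v ∈ V'), h v = h' ⟨v, hv⟩) ∧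
        h p = (s.1, w) ∧ h q = (s.2, w')) :=
  stmt_1_general H₁ W hproj S hS w w'
end

section
/- Let H be a finite simple graph that is a non-bipartite projective core. Then for every nonempty set S ⊆ V(H) × V(H) there exist a finite simple graph F, a set V' ⊆ V(F), a map h' : V' → V(H), and vertices p, q ∈ V(F) such that: (i) every homomorphism h : F → H with h|_{V'} = h' satisfies (h(p), h(q)) ∈ S; and (ii) for every (s₁,s₂) ∈ S there exists a homomorphism h : F → H with h|_{V'} = h', h(p) = s₁ and h(q) = s₂. -/
/-!
Enumerate `S` as `g : Fin ℓ → V × V` with `ℓ ≥ 2` and take `F = H^ℓ` with the diagonal pinned to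
the identity, `p = (i ↦ (g i).1)` and `q = (i ↦ (g i).2)`. A homomorphism `H^ℓ → H` fixing the
diagonal is a projection by projectivity, so it sends `(p, q)` to some `g i ∈ S`; conversely the
`i`-th projection realises `g i`.
-/

/-- The `ℓ`-fold direct (tensor) power of a simple graph `H`: two tuples are
adjacent iff they are adjacent in every coordinate (for `ℓ ≥ 1` the inequality
condition is automatic and only serves to keep the graph loopless). -/
def tensorPow {V : Type} (H : SimpleGraph V) (ℓ : ℕ) :
    SimpleGraph (Fin ℓ → V) where
  Adj x y := x ≠ y ∧ ∀ i, H.Adj (x i) (y i)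
  symm := ⟨fun _ _ h => ⟨h.1.symm, fun i => (h.2 i).symm⟩⟩
  loopless := ⟨fun _ h => h.1 rfl⟩

/-- A simple graph `H` is projective if for every `ℓ ≥ 2`, every idempotent
homomorphism `f : H^ℓ → H` is a projection onto one of the coordinates. -/
def Projective {V : Type} (H : SimpleGraph V) : Prop :=
  ∀ ℓ : ℕ, 2 ≤ ℓ → ∀ f : tensorPow H ℓ →g H,
    (∀ x : V, f (fun _ => x) = x) → ∃ i : Fin ℓ, ∀ z : Fin ℓ → V, f z = z i

theorem Set.Finite.exists_fin_add_two_range_eq {α : Type*} {s : Set α} (hs : s.Finite)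
    (hne : s.Nonempty) : ∃ (n : ℕ) (g : Fin (n + 2) → α), Set.range g = s := by
  obtain ⟨a, ha⟩ := hne
  obtain ⟨n, f, hf⟩ := hs.fin_embedding
  refine ⟨n, Fin.cons a (Fin.cons a f), ?_⟩
  simp only [Fin.range_cons, hf, Set.insert_eq_of_mem ha]

def tensorPow.proj {V : Type} (H : SimpleGraph V) {ℓ : ℕ} (i : Fin ℓ) : tensorPow H ℓ →g H :=
  ⟨fun z => z i, fun h => h.2 i⟩

theorem Projective.map_fst_snd_mem_range {V : Type} {H : SimpleGraph V} (hproj : Projective H)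
    {ℓ : ℕ} (g : Fin (ℓ + 2) → V × V) (f : tensorPow H (ℓ + 2) →g H)
    (hf : ∀ x : V, f (fun _ => x) = x) :
    (f (Prod.fst ∘ g), f (Prod.snd ∘ g)) ∈ Set.range g := by
  obtain ⟨i, hi⟩ := hproj (ℓ + 2) (by omega) f hf
  exact ⟨i, by rw [hi, hi]; rfl⟩

theorem stmt_3_general {V : Type} [Fintype V] (H : SimpleGraph V)
    (hproj : Projective H)
    (S : Set (V × V)) (hS : S.Nonempty) :
    ∃ (VF : Type) (_ : Fintype VF) (F : SimpleGraph VF) (V' : Set VF)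
      (h' : V' → V) (p q : VF),
      (∀ h : F →g H,
        (∀ (v : VF) (hv : v ∈ V'), h v = h' ⟨v, hv⟩) → (h p, h q) ∈ S) ∧
      (∀ s ∈ S, ∃ h : F →g H,
        (∀ (v : VF) (hv : v ∈ V'), h v = h' ⟨v, hv⟩) ∧ h p = s.1 ∧ h q = s.2) := by
  obtain ⟨n, g, rfl⟩ := S.toFinite.exists_fin_add_two_range_eq hS
  refine ⟨Fin (n + 2) → V, inferInstance, tensorPow H (n + 2), Set.range fun x _ => x,
    fun z => z.1 0, Prod.fst ∘ g, Prod.snd ∘ g, ?_, ?_⟩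
  · intro f hf
    exact hproj.map_fst_snd_mem_range g f fun x => hf _ ⟨x, rfl⟩
  · rintro _ ⟨i, rfl⟩
    exact ⟨tensorPow.proj H i, by rintro _ ⟨x, rfl⟩; rfl, rfl, rfl⟩

/-- Existence of `S`-gadgets for a non-bipartite projective core `H`. -/
theorem stmt_3 {V : Type} [Fintype V] (H : SimpleGraph V)
    (hcore : ∀ f : H →g H, Function.Injective f)
    (hnonbip : ¬ H.Colorable 2)
    (hproj : Projective H)
    (S : Set (V × V)) (hS : S.Nonempty) :
    ∃ (VF : Type) (_ : Fintype VF) (F : SimpleGraph VF) (V' : Set VF)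
      (h' : V' → V) (p q : VF),
      (∀ h : F →g H,
        (∀ (v : VF) (hv : v ∈ V'), h v = h' ⟨v, hv⟩) → (h p, h q) ∈ S) ∧
      (∀ s ∈ S, ∃ h : F →g H,
        (∀ (v : VF) (hv : v ∈ V'), h v = h' ⟨v, hv⟩) ∧ h p = s.1 ∧ h q = s.2) :=
  stmt_3_general H hproj S hS
end

section
/- Let H be a finite simple (loopless) graph on n ≥ 1 vertices. Then s(H) = 2^n − 2 if and only if H is a complete graph. -/
/-- The signature set `S(T)` of a set `T` of vertices of `H`: the set of common
neighbors of all vertices of `T`. -/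
def sigSet {V : Type} (H : SimpleGraph V) (T : Set V) : Set V :=
  ⋂ t ∈ T, H.neighborSet t

/-- The family `𝒮(H)` of all nonempty signature sets of nonempty vertex sets. -/
def sigFamily {V : Type} (H : SimpleGraph V) : Set (Set V) :=
  {S | S.Nonempty ∧ ∃ T : Set V, T.Nonempty ∧ sigSet H T = S}

/-- The signature number `s(H)`, i.e. the cardinality of `𝒮(H)`. -/
noncomputable def sigNum {V : Type} (H : SimpleGraph V) : ℕ := (sigFamily H).ncard

/-!
Since `H` is loopless, `S(T)` is disjoint from `T`; as `T` is nonempty, every member of `𝒮(H)`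
is a nonempty proper subset of `V`, and there are `2^n - 2` of those. If `H` is complete, then
`S(T) = V \ T`, so every nonempty proper subset `S` occurs, as `S(V \ S)`. If `u ≠ v` are not
adjacent, then `V \ {u}` does not occur: `S(T) = V \ {u}` forces `T = {u}`, but `v ∉ N(u)`.
-/

def properNonemptySets (V : Type) : Set (Set V) :=
  {S | S.Nonempty ∧ S ≠ Set.univ}

section Signature

variable {V : Type} (H : SimpleGraph V)

theorem ncard_properNonemptySets [Fintype V] :
    (properNonemptySets V).ncard = 2 ^ Fintype.card V - 2 := by
  cases isEmpty_or_nonempty V with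
  | inl hV =>
    have hempty : properNonemptySets V = ∅ :=
      Set.eq_empty_of_forall_notMem fun S hS => hS.1.ne_empty S.eq_empty_of_isEmpty
    simp [hempty]
  | inr hV =>
    have hdiff : properNonemptySets V = Set.univ \ {∅, Set.univ} := by
      ext S
      simp [properNonemptySets, Set.nonempty_iff_ne_empty]
    rw [hdiff, Set.ncard_sdiff (Set.subset_univ _), Set.ncard_univ,
      Set.ncard_pair Set.empty_ne_univ, Nat.card_eq_fintype_card, Fintype.card_set]

theorem sigSet_subset_compl (T : Set V) : sigSet H T ⊆ Tᶜ :=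
  fun x hx hxT => H.irrefl (Set.mem_iInter₂.1 hx x hxT)

theorem sigSet_eq_compl (hc : ∀ u v : V, u ≠ v → H.Adj u v) (T : Set V) :
    sigSet H T = Tᶜ := by
  refine (sigSet_subset_compl H T).antisymm fun x hx => Set.mem_iInter₂.2 fun t ht => ?_
  exact hc t x fun h => hx (h ▸ ht)

theorem sigFamily_subset_properNonemptySets : sigFamily H ⊆ properNonemptySets V := by
  rintro S ⟨hS, T, ⟨t, ht⟩, rfl⟩
  exact ⟨hS, fun h => sigSet_subset_compl H T (h ▸ Set.mem_univ t) ht⟩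

theorem compl_singleton_notMem_sigFamily {u v : V} (huv : u ≠ v) (hnadj : ¬H.Adj u v) :
    ({u}ᶜ : Set V) ∉ sigFamily H := by
  rintro ⟨-, T, ⟨t, ht⟩, hT⟩
  have hTu : T ⊆ {u} := by
    intro s hs
    by_contra hsu
    exact sigSet_subset_compl H T (hT ▸ hsu) hs
  obtain rfl : t = u := hTu ht
  exact hnadj (Set.mem_iInter₂.1 (hT ▸ huv.symm : v ∈ sigSet H T) t ht)

theorem sigFamily_eq_properNonemptySets_iff :
    sigFamily H = properNonemptySets V ↔ ∀ u v : V, u ≠ v → H.Adj u v := by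
  constructor
  · intro h u v huv
    by_contra hnadj
    apply compl_singleton_notMem_sigFamily H huv hnadj
    rw [h]
    exact ⟨⟨v, huv.symm⟩, fun h' => (h'.symm ▸ Set.mem_univ u : u ∈ ({u}ᶜ : Set V)) rfl⟩
  · intro hc
    refine (sigFamily_subset_properNonemptySets H).antisymm fun S ⟨hS, hSu⟩ => ?_
    exact ⟨hS, Sᶜ, Set.nonempty_compl.2 hSu, by rw [sigSet_eq_compl H hc, compl_compl]⟩

end Signature

theorem stmt_10_general {V : Type} [Fintype V] (H : SimpleGraph V) :
    sigNum H = 2 ^ Fintype.card V - 2 ↔ ∀ u v : V, u ≠ v → H.Adj u v := by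
  rw [sigNum, ← ncard_properNonemptySets, ← sigFamily_eq_properNonemptySets_iff]
  constructor
  · intro h
    exact Set.eq_of_subset_of_ncard_le (sigFamily_subset_properNonemptySets H) h.ge
      (Set.toFinite _)
  · intro h
    rw [h]

/-- `s(H) = 2^n − 2` holds exactly for complete graphs. -/
theorem stmt_10 {V : Type} [Fintype V] (H : SimpleGraph V)
    (hn : 1 ≤ Fintype.card V) :
    sigNum H = 2 ^ Fintype.card V - 2 ↔ ∀ u v : V, u ≠ v → H.Adj u v :=
  stmt_10_general H
end

section
/- Let H be a finite simple graph with at least two vertices that is a core. Then s(H) ≥ |V(H)|. -/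
/-!
In a core every vertex has a nonempty neighbourhood and distinct vertices have distinct
neighbourhoods: if `N(u) ⊆ N(v)` for `u ≠ v`, folding `u` onto `v` is a non-injective
endomorphism. An empty neighbourhood is contained in that of any other vertex, which exists
since there are at least two. Hence the `|V|` neighbourhoods `N(v) = S({v})` are pairwise
distinct members of `𝒮(H)`.
-/

namespace SimpleGraph

variable {V : Type} {H : SimpleGraph V}

def foldHom [DecidableEq V] (u v : V) (h : H.neighborSet u ⊆ H.neighborSet v) : H →g H where
  toFun := Function.update id u v
  map_rel' {a b} hab := by
    by_cases ha : a = u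
    · subst ha
      rw [Function.update_self, Function.update_of_ne hab.ne.symm]
      exact h hab
    by_cases hb : b = u
    · subst hb
      rw [Function.update_self, Function.update_of_ne ha]
      exact (h hab.symm).symm
    rwa [Function.update_of_ne ha, Function.update_of_ne hb]

theorem eq_of_neighborSet_subset_of_forall_injective
    (hcore : ∀ f : H →g H, Function.Injective f) {u v : V}
    (h : H.neighborSet u ⊆ H.neighborSet v) : u = v := by
  classical
  by_contra huv
  apply huv
  apply hcore (foldHom u v h)
  change Function.update id u v u = Function.update id u v v
  rw [Function.update_self, Function.update_of_ne (Ne.symm huv), id]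

theorem neighborSet_nonempty_of_forall_injective [Fintype V] (hn : 2 ≤ Fintype.card V)
    (hcore : ∀ f : H →g H, Function.Injective f) (u : V) : (H.neighborSet u).Nonempty := by
  obtain ⟨w, hwu⟩ := Fintype.exists_ne_of_one_lt_card hn u
  by_contra hempty
  rw [Set.not_nonempty_iff_eq_empty] at hempty
  refine hwu (eq_of_neighborSet_subset_of_forall_injective hcore ?_).symm
  simp [hempty]

theorem neighborSet_injective_of_forall_injective
    (hcore : ∀ f : H →g H, Function.Injective f) : Function.Injective H.neighborSet :=
  fun _ _ huv => eq_of_neighborSet_subset_of_forall_injective hcore huv.le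

theorem sigSet_singleton (v : V) : sigSet H {v} = H.neighborSet v := by
  simp [sigSet]

theorem neighborSet_mem_sigFamily {v : V} (hv : (H.neighborSet v).Nonempty) :
    H.neighborSet v ∈ sigFamily H :=
  ⟨hv, {v}, Set.singleton_nonempty v, sigSet_singleton v⟩

theorem card_le_sigNum [Fintype V] (hne : ∀ v, (H.neighborSet v).Nonempty)
    (hinj : Function.Injective H.neighborSet) : Fintype.card V ≤ sigNum H := by
  calc Fintype.card V = (Set.range H.neighborSet).ncard := by
        rw [← Set.image_univ, Set.ncard_image_of_injective _ hinj, Set.ncard_univ,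
          Nat.card_eq_fintype_card]
    _ ≤ sigNum H := by
        refine Set.ncard_le_ncard ?_ (Set.toFinite _)
        rintro _ ⟨v, rfl⟩
        exact neighborSet_mem_sigFamily (hne v)

end SimpleGraph

/-- a core with at least two vertices satisfies `s(H) ≥ |V(H)|`. -/
theorem stmt_13 {V : Type} [Fintype V] (H : SimpleGraph V)
    (hn : 2 ≤ Fintype.card V)
    (hcore : ∀ f : H →g H, Function.Injective f) :
    Fintype.card V ≤ sigNum H :=
  SimpleGraph.card_le_sigNum
    (SimpleGraph.neighborSet_nonempty_of_forall_injective hn hcore)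
    (SimpleGraph.neighborSet_injective_of_forall_injective hcore)
end

section
/- Let H' be a finite simple graph, let U ⊆ V(H'), and let H = H'[U] be the subgraph of H' induced by U. Then s(H) ≤ s(H'). -/
namespace SimpleGraph

variable {V : Type} (H : SimpleGraph V)

lemma mem_sigSet {T : Set V} {x : V} : x ∈ sigSet H T ↔ ∀ t ∈ T, H.Adj t x := by
  simp [sigSet]

lemma sigSet_anti {T₁ T₂ : Set V} (h : T₁ ⊆ T₂) : sigSet H T₂ ⊆ sigSet H T₁ :=
  fun _ hx => (mem_sigSet H).2 fun t ht => (mem_sigSet H).1 hx t (h ht)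

lemma subset_sigSet_sigSet (T : Set V) : T ⊆ sigSet H (sigSet H T) :=
  fun x hx => (mem_sigSet H).2 fun _ hs => ((mem_sigSet H).1 hs x hx).symm

lemma sigSet_induce (U : Set V) (T : Set U) :
    sigSet (H.induce U) T = Subtype.val ⁻¹' sigSet H (Subtype.val '' T) := by
  ext x
  simp [mem_sigSet]

lemma preimage_sigSet_sigSet_image {U : Set V} {S : Set U}
    (hS : ∃ T, sigSet (H.induce U) T = S) :
    Subtype.val ⁻¹' sigSet H (sigSet H (Subtype.val '' S)) = S := by
  obtain ⟨T, rfl⟩ := hS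
  refine subset_antisymm ?_ (Set.image_subset_iff.1 (subset_sigSet_sigSet H _))
  have hT : Subtype.val '' T ⊆ sigSet H (Subtype.val '' sigSet (H.induce U) T) := by
    rw [Set.image_subset_iff, ← sigSet_induce]
    exact subset_sigSet_sigSet _ T
  calc _ ⊆ Subtype.val ⁻¹' sigSet H (Subtype.val '' T) := Set.preimage_mono (sigSet_anti H hT)
    _ = sigSet (H.induce U) T := (sigSet_induce H U T).symm

lemma mapsTo_sigFamily_induce (U : Set V) :
    Set.MapsTo (fun S : Set U => sigSet H (Subtype.val '' S))
      (sigFamily (H.induce U)) (sigFamily H) := by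
  rintro S ⟨hSne, T, ⟨t, ht⟩, rfl⟩
  refine ⟨⟨t, ?_⟩, _, hSne.image _, rfl⟩
  rw [← Set.mem_preimage, ← sigSet_induce]
  exact subset_sigSet_sigSet _ T ht

lemma injOn_sigFamily_induce (U : Set V) :
    Set.InjOn (fun S : Set U => sigSet H (Subtype.val '' S)) (sigFamily (H.induce U)) := by
  intro S₁ h₁ S₂ h₂ h
  rw [← preimage_sigSet_sigSet_image H (h₁.2.imp fun _ => And.right),
    ← preimage_sigSet_sigSet_image H (h₂.2.imp fun _ => And.right)]
  exact congrArg (fun X => Subtype.val ⁻¹' sigSet H X) h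

end SimpleGraph

/-- the signature number of an induced subgraph is at most that
of the whole graph. -/
theorem stmt_14 {V' : Type} [Fintype V'] (H' : SimpleGraph V') (U : Set V') :
    sigNum (H'.induce U) ≤ sigNum H' :=
  Set.ncard_le_ncard_of_injOn _ (H'.mapsTo_sigFamily_induce U) (H'.injOn_sigFamily_induce U)
end
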